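/- arXiv:2007.06549 — 8 statements merged into one kernel-verified Lean document; each statement's English description precedes it below -/
import Mathlib

section
/- Let P be a preference profile (a family of strict total orders) on a finite candidate set C and T a tree on vertex set C. Then P is single-peaked on T if and only if for every voter i and every candidate a, the top-initial segment {b ∈ C : b ≻_i a} is connected in T. -/
/-- A profile `pref` with top candidates `top` is single-peaked on the tree `T`:
for every voter `i` and distinct candidates `a b` with `b ≠ top i` lying on
the (unique) path in `T` from `top i` to `a`, we have `top i ≻ᵢ b ≻ᵢ a`. -/
def SinglePeakedOn {V C : Type*} (pref : V → C → C → Prop) (top : V → C)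
    (T : SimpleGraph C) : Prop :=
  ∀ (i : V) (a b : C), a ≠ b → b ≠ top i →
    (∃ p : T.Walk (top i) a, p.IsPath ∧ b ∈ p.support) →
    pref i (top i) b ∧ pref i b a

private lemma reach_induce {C : Type*} (T : SimpleGraph C) (S : Set C) :
    ∀ {u v : C} (w : T.Walk u v) (_ : ∀ x ∈ w.support, x ∈ S)
      (hu : u ∈ S) (hv : v ∈ S),
      (T.induce S).Reachable ⟨u, hu⟩ ⟨v, hv⟩ := by
  intro u v w
  induction w with
  | nil => intro _ hu hv; rfl
  | @cons u x v h w ih =>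
    intro hsupp hu hv
    have hx : x ∈ S := hsupp x (by simp)
    refine (SimpleGraph.Adj.reachable ?_).trans
      (ih (fun y hy => hsupp y (by simp [hy])) hx hv)
    exact h

theorem stmt0 {V C : Type*} [Fintype C]
    (pref : V → C → C → Prop) (hlin : ∀ i, IsStrictTotalOrder C (pref i))
    (top : V → C) (htop : ∀ i b, b ≠ top i → pref i (top i) b)
    (T : SimpleGraph C) (hT : T.IsTree) :
    SinglePeakedOn pref top T ↔
      ∀ (i : V) (a : C), (T.induce {b | pref i b a}).Preconnected := by
  constructor
  · intro hsp i a
    haveI := hlin i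
    set S : Set C := {b | pref i b a} with hS
    -- top i belongs to S whenever S is inhabited, and paths from top i stay in S
    have key : ∀ b (hb : b ∈ S),
        (T.induce S).Reachable ⟨b, hb⟩
          ⟨top i, by
            by_cases hbt : b = top i
            · exact hbt ▸ hb
            · exact trans_of (pref i) (htop i b hbt) hb⟩ := by
      intro b hb
      have htopS : top i ∈ S := by
        by_cases hbt : b = top i
        · exact hbt ▸ hb
        · exact trans_of (pref i) (htop i b hbt) hb
      obtain ⟨p, hp, -⟩ := hT.existsUnique_path (top i) b
      have hsupp : ∀ x ∈ p.support, x ∈ S := by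
        intro x hx
        by_cases hxb : x = b
        · exact hxb ▸ hb
        by_cases hxt : x = top i
        · exact hxt ▸ htopS
        have := hsp i b x (Ne.symm hxb) hxt ⟨p, hp, hx⟩
        exact trans_of (pref i) this.2 hb
      exact (reach_induce T S p hsupp htopS hb).symm
    intro u v
    exact (key u.1 u.2).trans (key v.1 v.2).symm
  · intro hcon i a b hab hbt ⟨p, hp, hbp⟩
    haveI := hlin i
    haveI : DecidableEq C := Classical.decEq C
    refine ⟨htop i b hbt, ?_⟩
    by_contra hn
    have hab' : pref i a b := by
      rcases trichotomous_of (pref i) b a with h | h | h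
      · exact absurd h hn
      · exact absurd h hab.symm
      · exact h
    set S : Set C := {c | pref i c b} with hS
    have htopS : top i ∈ S := htop i b hbt
    have haS : a ∈ S := hab'
    obtain ⟨w⟩ := hcon i b ⟨top i, htopS⟩ ⟨a, haS⟩
    have hbS : b ∉ S := fun h => irrefl_of (pref i) b h
    set f : T.induce S ↪g T := SimpleGraph.Embedding.induce S
    have hw : b ∉ (w.map f.toHom).support := by
      rw [SimpleGraph.Walk.support_map]
      intro hmem
      obtain ⟨c, hc, hcb⟩ := List.mem_map.mp hmem
      exact hbS (hcb ▸ c.2)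
    have heq : p = (w.map f.toHom).toPath.1 := by
      obtain ⟨q, -, huniq⟩ := hT.existsUnique_path (top i) a
      rw [huniq p hp, huniq (w.map f.toHom).toPath.1 (w.map f.toHom).toPath.2]
    exact hw (SimpleGraph.Walk.support_toPath_subset _ (heq ▸ hbp))
end

section
/- Suppose a profile P is single-peaked on a tree T, and some candidate a is ranked last by some voter i. Then a is a leaf of T. -/
/-- If some voter ranks `a` last and the profile is single-peaked on the tree `T`
(with at least two candidates), then `a` is a leaf of `T`, i.e., it has a unique neighbor. -/
theorem stmt2 {V C : Type*} [Fintype C] (hC : 2 ≤ Fintype.card C)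
    (pref : V → C → C → Prop) (hlin : ∀ i, IsStrictTotalOrder C (pref i))
    (top : V → C) (htop : ∀ i b, b ≠ top i → pref i (top i) b)
    (T : SimpleGraph C) (hT : T.IsTree)
    (hsp : SinglePeakedOn pref top T)
    (i : V) (a : C) (hbot : ∀ b, b ≠ a → pref i b a) :
    ∃! b, T.Adj a b := by
  classical
  haveI := hlin i
  have asymm : ∀ x y : C, pref i x y → pref i y x → False := fun x y h1 h2 =>
    irrefl_of (pref i) x (trans_of (pref i) h1 h2)
  -- `a` is not the top of voter `i`
  have hat : a ≠ top i := by
    intro h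
    obtain ⟨b, hb⟩ := Fintype.exists_ne_of_one_lt_card hC a
    have h1 := htop i b (h ▸ hb)
    rw [← h] at h1
    exact asymm _ _ h1 (hbot b hb)
  obtain ⟨p, hp, hup⟩ := hT.existsUnique_path (top i) a
  -- every neighbor of `a` is on the path `p`
  have hmem : ∀ c, T.Adj a c → c ∈ p.support := by
    intro c hc
    by_contra hcp
    have hq : ((SimpleGraph.Walk.cons hc.symm p.reverse).reverse).IsPath := by
      apply SimpleGraph.Walk.IsPath.reverse
      rw [SimpleGraph.Walk.cons_isPath_iff]
      exact ⟨hp.reverse, by simpa [SimpleGraph.Walk.support_reverse] using hcp⟩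
    have hmem' : a ∈ ((SimpleGraph.Walk.cons hc.symm p.reverse).reverse).support := by
      simp [SimpleGraph.Walk.support_reverse]
    have := hsp i c a hc.ne' hat ⟨_, hq, hmem'⟩
    exact asymm _ _ this.2 (hbot c hc.ne')
  -- consider the reversed path `q : a → top i`
  set q := p.reverse with hqdef
  have hqp : q.IsPath := hp.reverse
  have hmemq : ∀ c, T.Adj a c → c ∈ q.support := by
    intro c hc
    rw [hqdef, SimpleGraph.Walk.support_reverse, List.mem_reverse]
    exact hmem c hc
  -- `a` is not in the dropUntil part (for c ≠ a)
  have hkey : ∀ (c : C) (hcq : c ∈ q.support), c ≠ a → a ∉ (q.dropUntil c hcq).support := by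
    intro c hcq hca hain
    have hnodup := hqp.support_nodup
    have hsplit : q.support = (q.takeUntil c hcq).support ++ (q.dropUntil c hcq).support.tail := by
      conv_lhs => rw [← SimpleGraph.Walk.take_spec q hcq]
      exact SimpleGraph.Walk.support_append _ _
    rw [hsplit] at hnodup
    have h1 : a ∈ (q.takeUntil c hcq).support := SimpleGraph.Walk.start_mem_support _
    have h2 : a ∈ (q.dropUntil c hcq).support.tail := by
      have := (q.dropUntil c hcq).support_eq_cons
      rw [this] at hain
      rcases List.mem_cons.mp hain with h | h
      · exact absurd h hca.symm
      · exact h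
    exact (List.disjoint_of_nodup_append hnodup) h1 h2
  -- any neighbor `c` gives path `cons hc (q.dropUntil c)` from a to top i, which must be q
  have huniq : ∀ (c : C) (hc : T.Adj a c), SimpleGraph.Walk.cons hc (q.dropUntil c (hmemq c hc)) = q := by
    intro c hc
    have hpath : (SimpleGraph.Walk.cons hc (q.dropUntil c (hmemq c hc))).IsPath := by
      rw [SimpleGraph.Walk.cons_isPath_iff]
      exact ⟨hqp.dropUntil _, hkey c (hmemq c hc) hc.ne'⟩
    obtain ⟨r, hr, hur⟩ := hT.existsUnique_path a (top i)
    rw [hur _ hpath, hur _ hqp]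
  -- extract the unique neighbor via getVert 1
  have hne : ∀ (c c' : C), T.Adj a c → T.Adj a c' → c = c' := by
    intro c c' hc hc'
    have h1 := huniq c hc
    have h2 := huniq c' hc'
    have : (SimpleGraph.Walk.cons hc (q.dropUntil c (hmemq c hc))).getVert 1
        = (SimpleGraph.Walk.cons hc' (q.dropUntil c' (hmemq c' hc'))).getVert 1 := by
      rw [h1, h2]
    simpa [SimpleGraph.Walk.getVert_cons_succ, SimpleGraph.Walk.getVert_zero] using this
  -- existence of a neighbor: q is not nil since a ≠ top i
  have hnn : ¬ q.Nil := SimpleGraph.Walk.not_nil_of_ne hat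
  obtain ⟨b, hb, q', hq'⟩ := SimpleGraph.Walk.not_nil_iff.mp hnn
  exact ⟨b, hb, fun c hc => hne c b hc hb⟩
end

section
/- Let P be a profile in which candidate a is ranked last by some voter. Define B(a) as the intersection over all voters i of B(i,a), where B(i,a) = {second(i)} if top(i) = a and B(i,a) = {c : c ≻_i a} otherwise. If P restricted to C \ {a} is single-peaked on a tree T' on vertex set C \ {a}, and T is obtained from T' by attaching a as a leaf adjacent to some b ∈ B(a), then P is single-peaked on T. -/
private lemma connLemma {C : Type*} {a b : C}
    (T' : SimpleGraph {c : C // c ≠ a}) (T : SimpleGraph C)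
    (hadj : ∀ x y : {c : C // c ≠ a}, T'.Adj x y → T.Adj ↑x ↑y)
    (hab : T.Adj a b)
    (S : Set C)
    (hS' : (T'.induce {y : {c : C // c ≠ a} | ↑y ∈ S}).Preconnected)
    (hcond : a ∈ S → S = {a} ∨ b ∈ S) :
    (T.induce S).Preconnected := by
  classical
  have key : ∀ (u v : C) (hu : u ∈ S) (hv : v ∈ S) (hua : u ≠ a) (hva : v ≠ a),
      (T.induce S).Reachable ⟨u, hu⟩ ⟨v, hv⟩ := by
    intro u v hu hv hua hva
    let f : T'.induce {y : {c : C // c ≠ a} | ↑y ∈ S} →g T.induce S :=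
      ⟨fun y => ⟨↑y.1, y.2⟩, by
        rintro ⟨y, hy⟩ ⟨z, hz⟩ h
        exact hadj _ _ h⟩
    exact (hS' ⟨⟨u, hua⟩, hu⟩ ⟨⟨v, hva⟩, hv⟩).map f
  have hbne : b ≠ a := hab.ne'
  have edge : ∀ (ha : a ∈ S) (hb : b ∈ S),
      (T.induce S).Adj ⟨a, ha⟩ ⟨b, hb⟩ := fun _ _ => hab
  have hEq : ∀ {w z : ↥S}, (w : C) = (z : C) → (T.induce S).Reachable w z := by
    intro w z h
    rw [Subtype.ext h]
  rintro ⟨u, hu⟩ ⟨v, hv⟩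
  by_cases hua : u = a
  · by_cases hva : v = a
    · exact hEq (hua.trans hva.symm)
    · have haS : a ∈ S := hua ▸ hu
      have hbS : b ∈ S := by
        rcases hcond haS with h | h
        · exact absurd (Set.mem_singleton_iff.mp (h ▸ hv)) hva
        · exact h
      exact (hEq hua).trans (((edge haS hbS).reachable).trans (key b v hbS hv hbne hva))
  · by_cases hva : v = a
    · have haS : a ∈ S := hva ▸ hv
      have hbS : b ∈ S := by
        rcases hcond haS with h | h
        · exact absurd (Set.mem_singleton_iff.mp (h ▸ hu)) hua
        · exact h
      exact ((key u b hu hbS hua hbne).trans ((edge haS hbS).reachable.symm)).trans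
        (hEq hva.symm)
    · exact key u v hu hv hua hva

/-- If `a` is ranked last by some voter, `P` restricted to `C \ {a}` is single-peaked
on a tree `T'`, and `T` is obtained from `T'` by attaching `a` as a leaf adjacent to
some `b ∈ B(a)`, then `P` is single-peaked on `T` (single-peakedness stated via
connectivity of all top-initial segments). -/
theorem stmt4 {V C : Type*} [Fintype C]
    (pref : V → C → C → Prop) (hlin : ∀ i, IsStrictTotalOrder C (pref i))
    (top second : V → C)
    (htop : ∀ i c, c ≠ top i → pref i (top i) c)
    (hsec₁ : ∀ i, second i ≠ top i)
    (hsec₂ : ∀ i c, c ≠ top i → c ≠ second i → pref i (second i) c)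
    (a b : C) (hba : b ≠ a)
    (hbottom : ∃ i, ∀ c, c ≠ a → pref i c a)
    (hB : ∀ i, (top i = a → b = second i) ∧ (top i ≠ a → pref i b a))
    (T' : SimpleGraph {c : C // c ≠ a}) (hT' : T'.IsTree)
    (hsp' : ∀ (i : V) (x : {c : C // c ≠ a}),
      (T'.induce {y : {c : C // c ≠ a} | pref i (y : C) (x : C)}).Preconnected)
    (T : SimpleGraph C)
    (hTadj : ∀ x y : C, T.Adj x y ↔
      ((∃ (hx : x ≠ a) (hy : y ≠ a), T'.Adj ⟨x, hx⟩ ⟨y, hy⟩) ∨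
       (x = a ∧ y = b) ∨ (x = b ∧ y = a))) :
    ∀ (i : V) (x : C), (T.induce {y | pref i y x}).Preconnected := by
  classical
  intro i x
  haveI := hlin i
  have htr : ∀ {c d e : C}, pref i c d → pref i d e → pref i c e :=
    fun h1 h2 => trans_of (pref i) h1 h2
  have hirr : ∀ c : C, ¬ pref i c c := fun c => irrefl_of (pref i) c
  have hasy : ∀ {c d : C}, pref i c d → ¬ pref i d c :=
    fun h1 h2 => hirr _ (htr h1 h2)
  have htot : ∀ {c d : C}, c ≠ d → pref i c d ∨ pref i d c := by
    intro c d hcd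
    rcases trichotomous_of (pref i) c d with h | h | h
    · exact Or.inl h
    · exact absurd h hcd
    · exact Or.inr h
  have hadj : ∀ x y : {c : C // c ≠ a}, T'.Adj x y → T.Adj ↑x ↑y := by
    intro x y h
    exact (hTadj _ _).mpr (Or.inl ⟨x.2, y.2, h⟩)
  have hab : T.Adj a b := (hTadj a b).mpr (Or.inr (Or.inl ⟨rfl, rfl⟩))
  set S : Set C := {y | pref i y x} with hSdef
  by_cases hxa : x = a
  · obtain rfl := hxa.symm
    by_cases hta : top i = a
    · -- S is empty
      rintro ⟨u, hu⟩
      exfalso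
      have hune : u ≠ a := by
        intro h
        rw [h] at hu
        exact hirr a hu
      have hu' : pref i u a := hu
      rw [← hta] at hu'
      exact hasy (htop i u (fun h => hune (h.trans hta))) hu' 
    · have hbS : b ∈ S := (hB i).2 hta
      apply connLemma T' T hadj hab S _ (fun ha => absurd ha (hirr a))
      by_cases hall : ∀ y : {c : C // c ≠ a}, pref i ↑y a
      · -- the set is everything
        have heq : {y : {c : C // c ≠ a} | ↑y ∈ S} = Set.univ := by
          ext y; simp [hSdef, hall y]
        rw [heq]
        rintro ⟨u, hu⟩ ⟨v, hv⟩
        let f : T' →g T'.induce (Set.univ : Set {c : C // c ≠ a}) :=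
          ⟨fun y => ⟨y, trivial⟩, fun h => h⟩
        exact (hT'.isConnected.preconnected u v).map f
      · push_neg at hall
        obtain ⟨c, hc⟩ := hall
        have hwf : WellFounded (fun u v : {c : C // c ≠ a} => pref i ↑u ↑v) := by
          haveI : IsTrans {c : C // c ≠ a} (fun u v => pref i ↑u ↑v) :=
            ⟨fun _ _ _ h1 h2 => htr h1 h2⟩
          haveI : IsIrrefl {c : C // c ≠ a} (fun u v => pref i ↑u ↑v) :=
            ⟨fun u => hirr ↑u⟩
          exact Finite.wellFounded_of_trans_of_irrefl _
        obtain ⟨m, hmM, hmin⟩ :=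
          hwf.has_min {y : {c : C // c ≠ a} | ¬ pref i ↑y a} ⟨c, hc⟩
        have heq : {y : {c : C // c ≠ a} | ↑y ∈ S} =
            {y : {c : C // c ≠ a} | pref i ↑y ↑m} := by
          have ham : pref i a ↑m := by
            rcases htot (Ne.symm m.2) with h | h
            · exact h
            · exact absurd h hmM
          ext y
          simp only [Set.mem_setOf_eq, hSdef]
          constructor
          · intro h; exact htr h ham
          · intro h
            by_contra hya
            exact hmin y hya h
        rw [heq]
        exact hsp' i m
  · -- x ≠ a
    apply connLemma T' T hadj hab S _ ?_ 
    · exact hsp' i ⟨x, hxa⟩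
    · intro haS
      by_cases hta : top i = a
      · have hbsec : b = second i := (hB i).1 hta
        by_cases hxs : x = second i
        · left
          ext y
          simp only [hSdef, Set.mem_setOf_eq, Set.mem_singleton_iff]
          constructor
          · intro hy
            by_contra hyna
            have hynt : y ≠ top i := fun h => hyna (h.trans hta)
            have hyns : y ≠ second i := by
              intro h
              exact hirr _ (hxs ▸ h ▸ hy)
            exact hasy (hsec₂ i y hynt hyns) (hxs ▸ hy)
          · intro hy; subst hy; exact haS
        · right
          rw [hbsec]
          have hxnt : x ≠ top i := fun h => hxa (h.trans hta)
          exact hsec₂ i x hxnt hxs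
      · right
        exact htr ((hB i).2 hta) haS
end

section
/- A preference profile P on candidate set C with |C| ≥ 3 is single-peaked on a star (a tree with exactly one internal vertex) if and only if there exists a candidate c ∈ C such that every voter ranks c in first or second position. -/
/-!
A path in a star visits at most its two endpoints and the center, so in a profile single-peaked
on a star with center `c` any candidate between a voter's top and another candidate is `c`.
Hence every voter whose top is not `c` ranks `c` second; conversely, if every voter ranks `c`
first or second, the preferences are single-peaked on the star centered at `c`.
-/

namespace SimpleGraph

variable {C : Type*} {G : SimpleGraph C} {c : C}

theorem Walk.IsPath.mem_support_of_le_starGraph (hG : G ≤ starGraph c) {u v : C}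
    {p : G.Walk u v} (hp : p.IsPath) {b : C} (hb : b ∈ p.support) :
    b = u ∨ b = v ∨ b = c := by
  induction p with
  | nil => simp_all
  | @cons u w v h q ih =>
    rw [cons_isPath_iff] at hp
    rw [support_cons, List.mem_cons] at hb
    rcases hb with rfl | hb
    · exact .inl rfl
    rcases ih hp.1 hb with rfl | rfl | rfl
    · cases q with
      | nil => exact .inr (.inl rfl)
      | @cons _ w' _ h' q' =>
        -- an inner vertex `b ≠ c` is flanked on the path by two occurrences of `c`
        by_cases hbc : b = c
        · exact .inr (.inr hbc)
        · have hu : u = c := (starGraph_adj.1 (hG h)).2.resolve_right hbc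
          have hw' : w' = c := (starGraph_adj.1 (hG h')).2.resolve_left hbc
          exact absurd (by simp [hu, ← hw']) hp.2
    · exact .inr (.inl rfl)
    · exact .inr (.inr rfl)

end SimpleGraph

open SimpleGraph

section SinglePeaked

variable {V C : Type*} {pref : V → C → C → Prop} {top : V → C}

theorem SinglePeakedOn.pref_center {T : SimpleGraph C} {z : C} (hz : ∀ x, x ≠ z → T.Adj z x)
    (hsp : SinglePeakedOn pref top T) {i : V} (hi : top i ≠ z) {b : C} (hb : b ≠ top i)
    (hbz : b ≠ z) : pref i z b := by
  have hpath : (Walk.cons (hz _ hi).symm (Walk.cons (hz _ hbz) .nil)).IsPath := by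
    simp [hi, hb.symm, hbz.symm]
  exact (hsp i b z hbz hi.symm ⟨_, hpath, by simp⟩).2

theorem singlePeakedOn_of_le_starGraph {G : SimpleGraph C} {c : C} (hG : G ≤ starGraph c)
    (htop : ∀ i b, b ≠ top i → pref i (top i) b)
    (hc : ∀ i, top i = c ∨ ∀ b, b ≠ top i → b ≠ c → pref i c b) :
    SinglePeakedOn pref top G := by
  rintro i a b hab hbi ⟨p, hp, hb⟩
  refine ⟨htop i b hbi, ?_⟩
  obtain rfl : b = c := by
    rcases hp.mem_support_of_le_starGraph hG hb with h | h | h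
    exacts [absurd h hbi, absurd h.symm hab, h]
  have hai : a ≠ top i := by
    rintro rfl
    rw [Walk.nil_iff_support_eq.1 (Walk.isPath_iff_nil.1 hp), List.mem_singleton] at hb
    exact hbi hb
  exact (hc i).resolve_left hbi.symm a hai hab

end SinglePeaked

theorem stmt5_general {V C : Type*}
    (pref : V → C → C → Prop)
    (top : V → C) (htop : ∀ i b, b ≠ top i → pref i (top i) b) :
    (∃ (T : SimpleGraph C) (z : C), T.IsTree ∧
        (∀ x, x ≠ z → T.Adj z x) ∧ (∀ x y, T.Adj x y → x = z ∨ y = z) ∧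
        SinglePeakedOn pref top T)
      ↔ ∃ c : C, ∀ i, top i = c ∨ ∀ b, b ≠ top i → b ≠ c → pref i c b := by
  constructor
  · rintro ⟨T, z, -, hz, -, hsp⟩
    exact ⟨z, fun i => or_iff_not_imp_left.2 fun hi b hb hbz => hsp.pref_center hz hi hb hbz⟩
  · rintro ⟨c, hc⟩
    exact ⟨starGraph c, c, isTree_starGraph c, fun x hx => starGraph_center_adj (Ne.symm hx),
      fun x y h => (starGraph_adj.1 h).2, singlePeakedOn_of_le_starGraph le_rfl htop hc⟩

/-- A profile on at least 3 candidates is single-peaked on a star if and only if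
there is a candidate `c` that every voter ranks in first or second position. -/
theorem stmt5 {V C : Type*} [Fintype C] (hC : 3 ≤ Fintype.card C)
    (pref : V → C → C → Prop) (hlin : ∀ i, IsStrictTotalOrder C (pref i))
    (top : V → C) (htop : ∀ i b, b ≠ top i → pref i (top i) b) :
    (∃ (T : SimpleGraph C) (z : C), T.IsTree ∧
        (∀ x, x ≠ z → T.Adj z x) ∧ (∀ x y, T.Adj x y → x = z ∨ y = z) ∧
        SinglePeakedOn pref top T)
      ↔ ∃ c : C, ∀ i, top i = c ∨ ∀ b, b ≠ top i → b ≠ c → pref i c b :=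
  stmt5_general pref top htop
end

section
/- Let D = (C, A) be a circumtransitive directed acyclic graph with a unique sink, where the forced vertices are exactly those of out-degree at most 1 and the free vertices those of out-degree at least 2. Then every free vertex has an arc to at least one forced vertex. -/
/-- In a finite circumtransitive dag with a unique sink, where the forced vertices are
exactly those of out-degree at most 1, every free vertex has an arc to a forced vertex. -/
theorem stmt8 {C : Type*} [Fintype C] (A : C → C → Prop) (t : C)
    (hacyc : ∀ a, ¬ Relation.TransGen A a a)
    (hsink : ∀ b, ¬ A t b) (huniq : ∀ s, (∀ b, ¬ A s b) → s = t)
    (forced : C → Prop)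
    (hforced : ∀ a, forced a ↔ ∀ b c, A a b → A a c → b = c)
    (hclosed : ∀ a b, forced a → A a b → forced b)
    (htrans : ∀ a b c, ¬ forced a → ¬ forced b → A a b → A b c → A a c) :
    ∀ a, ¬ forced a → ∃ b, A a b ∧ forced b := by
  intro a ha
  by_contra h
  push_neg at h
  have key : ∀ b, A a b → ¬ forced b := fun b hb hf => h b hb hf
  have hwf : WellFounded (fun x y => Relation.TransGen A y x) := by
    have h1 : IsTrans C (fun x y => Relation.TransGen A y x) :=
      ⟨fun x y z h1 h2 => h2.trans h1⟩
    have h2 : IsIrrefl C (fun x y => Relation.TransGen A y x) := ⟨fun x => hacyc x⟩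
    exact Finite.wellFounded_of_trans_of_irrefl _
  have hout : ∀ x, ¬ forced x → ∃ y, A x y := by
    intro x hx
    rw [hforced] at hx
    push_neg at hx
    obtain ⟨b, c, hb, -⟩ := hx
    exact ⟨b, hb⟩
  obtain ⟨b0, hb0⟩ := hout a ha
  obtain ⟨m, hm, hmin⟩ := hwf.has_min {x | A a x} ⟨b0, hb0⟩
  obtain ⟨y, hy⟩ := hout m (key m hm)
  have hAy : A a y := htrans a m y ha (key m hm) hm hy
  exact hmin y hAy (Relation.TransGen.single hy)
end

section
/- For every tree T = (C, E) of pathwidth w, there exists a path decomposition S_1, ..., S_r of T of width w such that for every edge e ∈ E, at least one endpoint a of e appears in some bag S_i with |S_i| ≤ w. -/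
/-!
After each bag `S k` insert the bag `S k` minus one vertex `c ∉ S (k + 1)` (or `S k` itself
if `S k ⊆ S (k + 1)`). The inserted bag still contains `S k ∩ S (k + 1)`, so the bags through
every vertex still form an interval, and no bag grows. For an edge `xy`, take the last bag
`S k` containing both endpoints. If `S k` has size `w + 1`, then `S k ⊄ S (k + 1)`, so the bag
inserted after it has size `w` and misses only one vertex, hence contains `x` or `y`.
-/

/-- `L` is a path decomposition of `G`: every edge is contained in some bag, and for
every vertex the set of bags containing it forms an interval of the sequence. -/
def IsPathDecomp {C : Type*} (G : SimpleGraph C) (L : List (Finset C)) : Prop :=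
  (∀ x y : C, G.Adj x y → ∃ S ∈ L, x ∈ S ∧ y ∈ S) ∧
  (∀ (x : C) (i j k : Fin L.length), i ≤ j → j ≤ k →
      x ∈ L.get i → x ∈ L.get k → x ∈ L.get j)

namespace PathDecomp

variable {C : Type*}

def IsIntervalFamily (B : ℕ → Finset C) : Prop :=
  ∀ (x : C) (i j k : ℕ), i ≤ j → j ≤ k → x ∈ B i → x ∈ B k → x ∈ B j

theorem _root_.List.getD_mem_of_lt {α : Type*} {L : List α} {k : ℕ} (d : α)
    (hk : k < L.length) : L.getD k d ∈ L := by
  rw [List.getD_eq_getElem _ _ hk]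
  exact List.getElem_mem hk

theorem lt_length_of_mem_getD {L : List (Finset C)} {k : ℕ} {x : C} (hx : x ∈ L.getD k ∅) :
    k < L.length := by
  by_contra! hk
  rw [List.getD_eq_default _ _ hk] at hx
  exact Finset.notMem_empty x hx

theorem isPathDecomp_iff {G : SimpleGraph C} {L : List (Finset C)} :
    IsPathDecomp G L ↔
      (∀ x y : C, G.Adj x y → ∃ S ∈ L, x ∈ S ∧ y ∈ S) ∧ IsIntervalFamily (L.getD · ∅) := by
  refine and_congr_right fun _ => ⟨fun h x i j k hij hjk hi hk => ?_, fun h x i j k hij hjk => ?_⟩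
  · dsimp only at hi hk ⊢
    have hk' := lt_length_of_mem_getD hk
    have hi' := lt_length_of_mem_getD hi
    have hj' : j < L.length := by omega
    rw [List.getD_eq_getElem _ _ hi'] at hi
    rw [List.getD_eq_getElem _ _ hk'] at hk
    rw [List.getD_eq_getElem _ _ hj']
    exact h x ⟨i, hi'⟩ ⟨j, hj'⟩ ⟨k, hk'⟩ hij hjk hi hk
  · simpa [List.getD_eq_getElem] using h x i j k hij hjk

def interleave (B M : ℕ → Finset C) (m : ℕ) : Finset C :=
  if m % 2 = 0 then B (m / 2) else M (m / 2)

theorem interleave_subset {B M : ℕ → Finset C} (hM : ∀ k, M k ⊆ B k) (m : ℕ) :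
    interleave B M m ⊆ B (m / 2) := by
  unfold interleave
  split_ifs
  exacts [subset_rfl, hM _]

variable [DecidableEq C]

theorem IsIntervalFamily.interleave {B M : ℕ → Finset C} (hB : IsIntervalFamily B)
    (hM : ∀ k, M k ⊆ B k) (hinter : ∀ k, B k ∩ B (k + 1) ⊆ M k) :
    IsIntervalFamily (interleave B M) := by
  intro x i j k hij hjk hi hk
  have hi' := interleave_subset hM i hi
  have hk' := interleave_subset hM k hk
  have hj : x ∈ B (j / 2) :=
    hB x _ _ _ (Nat.div_le_div_right hij) (Nat.div_le_div_right hjk) hi' hk'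
  unfold PathDecomp.interleave
  split_ifs with hpar
  · exact hj
  obtain rfl | hjk := hjk.eq_or_lt
  · simpa [PathDecomp.interleave, hpar] using hk
  have hj' : x ∈ B (j / 2 + 1) := hB x _ _ _ (by omega) (by omega) hi' hk'
  exact hinter _ (Finset.mem_inter.mpr ⟨hj, hj'⟩)

noncomputable def separator (S T : Finset C) : Finset C :=
  if h : (S \ T).Nonempty then S.erase h.choose else S

theorem separator_subset (S T : Finset C) : separator S T ⊆ S := by
  unfold separator
  split_ifs
  exacts [Finset.erase_subset _ _, subset_rfl]

theorem inter_subset_separator (S T : Finset C) : S ∩ T ⊆ separator S T := by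
  unfold separator
  split_ifs with h
  · intro x hx
    rw [Finset.mem_inter] at hx
    refine Finset.mem_erase.mpr ⟨?_, hx.1⟩
    rintro rfl
    exact (Finset.mem_sdiff.mp h.choose_spec).2 hx.2
  · exact Finset.inter_subset_left

theorem card_separator_lt {S T : Finset C} (h : ¬S ⊆ T) : (separator S T).card < S.card := by
  have hne : (S \ T).Nonempty := Finset.sdiff_nonempty.mpr h
  simp only [separator, dif_pos hne]
  exact Finset.card_erase_lt_of_mem (Finset.mem_sdiff.mp hne.choose_spec).1

theorem exists_mem_separator {S T : Finset C} (h : ¬S ⊆ T) {x y : C} (hxy : x ≠ y)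
    (hx : x ∈ S) (hy : y ∈ S) : ∃ a, (a = x ∨ a = y) ∧ a ∈ separator S T := by
  have hne : (S \ T).Nonempty := Finset.sdiff_nonempty.mpr h
  simp only [separator, dif_pos hne, Finset.mem_erase]
  by_cases hc : hne.choose = x
  · exact ⟨y, Or.inr rfl, hc ▸ hxy.symm, hy⟩
  · exact ⟨x, Or.inl rfl, Ne.symm hc, hx⟩

noncomputable def bagsWithSeparators (L : List (Finset C)) : ℕ → Finset C :=
  interleave (L.getD · ∅) fun k => separator (L.getD k ∅) (L.getD (k + 1) ∅)

noncomputable def withSeparators (L : List (Finset C)) : List (Finset C) :=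
  (List.range (2 * L.length)).map (bagsWithSeparators L)

theorem bagsWithSeparators_two_mul (L : List (Finset C)) (k : ℕ) :
    bagsWithSeparators L (2 * k) = L.getD k ∅ := by
  simp [bagsWithSeparators, interleave]

theorem bagsWithSeparators_two_mul_add_one (L : List (Finset C)) (k : ℕ) :
    bagsWithSeparators L (2 * k + 1) = separator (L.getD k ∅) (L.getD (k + 1) ∅) := by
  simp [bagsWithSeparators, interleave, Nat.add_mod, Nat.add_div]

theorem bagsWithSeparators_subset (L : List (Finset C)) (m : ℕ) :
    bagsWithSeparators L m ⊆ L.getD (m / 2) ∅ :=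
  interleave_subset (fun _ => separator_subset _ _) m

theorem getD_withSeparators (L : List (Finset C)) (m : ℕ) :
    (withSeparators L).getD m ∅ = bagsWithSeparators L m := by
  by_cases hm : m < 2 * L.length
  · simp [withSeparators, List.getD_eq_getElem?_getD, List.getElem?_range hm]
  · rw [List.getD_eq_default _ _ (by simpa [withSeparators] using hm), eq_comm,
      ← Finset.subset_empty]
    refine (bagsWithSeparators_subset L m).trans ?_
    rw [List.getD_eq_default _ _ (by omega)]

theorem mem_withSeparators {L : List (Finset C)} {S : Finset C} :
    S ∈ withSeparators L ↔ ∃ m < 2 * L.length, bagsWithSeparators L m = S := by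
  simp [withSeparators]

theorem mem_withSeparators_of_mem {L : List (Finset C)} {S : Finset C} (hS : S ∈ L) :
    S ∈ withSeparators L := by
  obtain ⟨k, hk, rfl⟩ := List.mem_iff_getElem.mp hS
  refine mem_withSeparators.mpr ⟨2 * k, by omega, ?_⟩
  rw [bagsWithSeparators_two_mul, List.getD_eq_getElem _ _ hk]

theorem separator_mem_withSeparators {L : List (Finset C)} {k : ℕ} (hk : k < L.length) :
    separator (L.getD k ∅) (L.getD (k + 1) ∅) ∈ withSeparators L :=
  mem_withSeparators.mpr ⟨2 * k + 1, by omega, bagsWithSeparators_two_mul_add_one L k⟩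

theorem card_le_of_mem_withSeparators {L : List (Finset C)} {n : ℕ}
    (hL : ∀ S ∈ L, S.card ≤ n) {S : Finset C} (hS : S ∈ withSeparators L) : S.card ≤ n := by
  obtain ⟨m, hm, rfl⟩ := mem_withSeparators.mp hS
  exact (Finset.card_le_card (bagsWithSeparators_subset L m)).trans
    (hL _ (List.getD_mem_of_lt _ (by omega)))

theorem isPathDecomp_withSeparators {G : SimpleGraph C} {L : List (Finset C)}
    (hL : IsPathDecomp G L) : IsPathDecomp G (withSeparators L) := by
  rw [isPathDecomp_iff] at hL ⊢
  obtain ⟨hcover, hinterval⟩ := hL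
  refine ⟨fun x y hxy => ?_, ?_⟩
  · obtain ⟨S, hS, hx, hy⟩ := hcover x y hxy
    exact ⟨S, mem_withSeparators_of_mem hS, hx, hy⟩
  · simp only [getD_withSeparators]
    exact hinterval.interleave (fun _ => separator_subset _ _)
      (fun _ => inter_subset_separator _ _)

theorem exists_last_getD_superset {L : List (Finset C)} {s S : Finset C} (hs : s.Nonempty)
    (hS : S ∈ L) (hsS : s ⊆ S) :
    ∃ k < L.length, s ⊆ L.getD k ∅ ∧ ¬s ⊆ L.getD (k + 1) ∅ := by
  obtain ⟨k₀, hk₀, rfl⟩ := List.mem_iff_getElem.mp hS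
  set k := Nat.findGreatest (s ⊆ L.getD · ∅) L.length
  have hk : s ⊆ L.getD k ∅ :=
    Nat.findGreatest_spec (P := (s ⊆ L.getD · ∅)) hk₀.le (by rwa [List.getD_eq_getElem _ _ hk₀])
  obtain ⟨x, hx⟩ := hs
  refine ⟨k, lt_length_of_mem_getD (hk hx), hk, fun hk' => ?_⟩
  by_cases hlen : k + 1 ≤ L.length
  · exact Nat.findGreatest_is_greatest (Nat.lt_succ_self k) hlen hk'
  · rw [List.getD_eq_default _ _ (by omega)] at hk'
    exact Finset.notMem_empty x (hk' hx)

theorem exists_endpoint_mem_withSeparators_card_le {G : SimpleGraph C} {L : List (Finset C)}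
    (hL : IsPathDecomp G L) {w : ℕ} (hw : ∀ S ∈ L, S.card ≤ w + 1) {x y : C} (hxy : G.Adj x y) :
    ∃ a, (a = x ∨ a = y) ∧ ∃ S ∈ withSeparators L, a ∈ S ∧ S.card ≤ w := by
  obtain ⟨S, hS, hx, hy⟩ := hL.1 x y hxy
  obtain ⟨k, hk, hpair, hpair'⟩ := exists_last_getD_superset (Finset.insert_nonempty x {y}) hS
    (by simp [Finset.insert_subset_iff, hx, hy])
  have hxk : x ∈ L.getD k ∅ := hpair (by simp)
  have hyk : y ∈ L.getD k ∅ := hpair (by simp)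
  have hbag := List.getD_mem_of_lt ∅ hk
  by_cases hcard : (L.getD k ∅).card ≤ w
  · exact ⟨x, Or.inl rfl, _, mem_withSeparators_of_mem hbag, hxk, hcard⟩
  have hnsub : ¬L.getD k ∅ ⊆ L.getD (k + 1) ∅ := fun h => hpair' (hpair.trans h)
  obtain ⟨a, ha, haS⟩ := exists_mem_separator hnsub hxy.ne hxk hyk
  exact ⟨a, ha, _, separator_mem_withSeparators hk, haS,
    by linarith [card_separator_lt hnsub, hw _ hbag]⟩

end PathDecomp

theorem stmt13_general {C : Type*} (T : SimpleGraph C) (w : ℕ)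
    (hex : ∃ L, IsPathDecomp T L ∧ ∀ S ∈ L, S.card ≤ w + 1) :
    ∃ L, IsPathDecomp T L ∧ (∀ S ∈ L, S.card ≤ w + 1) ∧
      ∀ x y : C, T.Adj x y →
        ∃ a, (a = x ∨ a = y) ∧ ∃ S ∈ L, a ∈ S ∧ S.card ≤ w := by
  classical
  obtain ⟨L, hL, hw⟩ := hex
  exact ⟨PathDecomp.withSeparators L, PathDecomp.isPathDecomp_withSeparators hL,
    fun _ => PathDecomp.card_le_of_mem_withSeparators hw,
    fun _ _ => PathDecomp.exists_endpoint_mem_withSeparators_card_le hL hw⟩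

/-- Every tree of pathwidth `w` has a width-`w` path decomposition in which each edge has
an endpoint lying in a bag of size at most `w`. -/
theorem stmt13 {C : Type*} [Fintype C] (T : SimpleGraph C) (hT : T.IsTree) (w : ℕ)
    (hex : ∃ L, IsPathDecomp T L ∧ ∀ S ∈ L, S.card ≤ w + 1)
    (hmin : ∀ L, IsPathDecomp T L → ∃ S ∈ L, w + 1 ≤ S.card) :
    ∃ L, IsPathDecomp T L ∧ (∀ S ∈ L, S.card ≤ w + 1) ∧
      ∀ x y : C, T.Adj x y →
        ∃ a, (a = x ∨ a = y) ∧ ∃ S ∈ L, a ∈ S ∧ S.card ≤ w :=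
  stmt13_general T w hex
end

section
/- If two distinct voters in a profile P have preference orders that are exact reverses of each other, and P is single-peaked on a tree T with |C| ≥ 2 candidates, then T is a path and coincides with (the tree structure induced by) the common ranking: the edges of T are exactly the pairs of candidates adjacent in the first voter's ranking. -/
/-!
Make the first voter's ranking a linear order `<` on the candidates. Single-peakedness of the
first voter says that every strict lower set `{b | b < a}` is connected in `T`; since the second
voter has the reversed ranking, every strict upper set `{b | a < b}` is connected too. In a tree
this forces the unique path between `x` and `y` to stay between `x` and `y`. Hence `x` and `y`
are adjacent exactly when nothing lies strictly between them, i.e. `T` is the Hasse diagram of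
the ranking, which is a path whose leaves are the best and the worst candidate.
-/

namespace SimpleGraph

variable {V : Type*} {G : SimpleGraph V}

theorem IsAcyclic.support_subset_of_preconnected_induce (hG : G.IsAcyclic) {s : Set V}
    (hs : (G.induce s).Preconnected) {x y : V} (hx : x ∈ s) (hy : y ∈ s) {p : G.Walk x y}
    (hp : p.IsPath) : ∀ v ∈ p.support, v ∈ s := by
  obtain ⟨w⟩ := hs ⟨x, hx⟩ ⟨y, hy⟩
  classical
  let q : G.Walk x y := (w.map (Embedding.induce s).toHom).bypass
  have hq : p = q := congrArg Subtype.val <|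
    (hG.subsingleton_path x y).elim ⟨p, hp⟩ ⟨q, Walk.bypass_isPath _⟩
  intro v hv
  rw [hq] at hv
  have hv' : v ∈ (w.map (Embedding.induce s).toHom).support :=
    Walk.support_bypass_subset_support _ hv
  rw [Walk.support_map] at hv'
  obtain ⟨u, -, rfl⟩ := List.mem_map.mp hv'
  exact u.2

section LinearOrder

variable [LinearOrder V]

theorem IsAcyclic.support_subset_uIcc (hG : G.IsAcyclic)
    (hIio : ∀ a, (G.induce (Set.Iio a)).Preconnected)
    (hIoi : ∀ a, (G.induce (Set.Ioi a)).Preconnected)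
    {x y : V} {p : G.Walk x y} (hp : p.IsPath) : ∀ v ∈ p.support, v ∈ Set.uIcc x y := by
  intro v hv
  refine ⟨inf_le_iff.mpr ?_, le_sup_iff.mpr ?_⟩ <;> by_contra! h
  · exact lt_irrefl v (hG.support_subset_of_preconnected_induce (hIoi v) h.1 h.2 hp v hv)
  · exact lt_irrefl v (hG.support_subset_of_preconnected_induce (hIio v) h.1 h.2 hp v hv)

theorem IsTree.eq_hasse (hG : G.IsTree)
    (hIio : ∀ a, (G.induce (Set.Iio a)).Preconnected)
    (hIoi : ∀ a, (G.induce (Set.Ioi a)).Preconnected) : G = hasse V := by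
  have between {x y : V} {p : G.Walk x y} (hp : p.IsPath) :
      ∀ v ∈ p.support, v ∈ Set.uIcc x y :=
    hG.isAcyclic.support_subset_uIcc hIio hIoi hp
  have covBy_of_adj {x y : V} (hxy : G.Adj x y) (hlt : x < y) : x ⋖ y := by
    refine ⟨hlt, fun c hxc hcy => ?_⟩
    -- the path from `c` to `y` stays in `[c, y]`, so it avoids `x`; hence, by acyclicity,
    -- the path from `c` to `x` passes through `y`, which lies outside `[x, c]`
    obtain ⟨p, hp⟩ := (hG.existsUnique_path c x).exists
    obtain ⟨q, hq⟩ := (hG.existsUnique_path c y).exists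
    have hx : x ∉ q.support := fun hx => by
      have := between hq x hx
      rw [Set.uIcc_of_le hcy.le] at this
      exact (hxc.trans_le this.1).false
    have hy := between hp y <|
      hG.isAcyclic.mem_support_of_ne_mem_support_of_adj_of_isPath hp hq hxy hx
    rw [Set.uIcc_of_ge hxc.le] at hy
    exact (hcy.trans_le hy.2).false
  have adj_of_covBy {x y : V} (hxy : x ⋖ y) : G.Adj x y := by
    obtain ⟨p, hp⟩ := (hG.existsUnique_path x y).exists
    have hnil : ¬ p.Nil := Walk.not_nil_of_ne hxy.lt.ne
    have hsnd := between hp p.snd (p.getVert_mem_support 1)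
    rw [Set.uIcc_of_le hxy.le] at hsnd
    have hx : x < p.snd := hsnd.1.lt_of_ne (Walk.adj_snd hnil).ne
    exact hsnd.2.eq_of_not_lt (hxy.2 hx) ▸ Walk.adj_snd hnil
  ext x y
  rw [hasse_adj]
  refine ⟨fun h => ?_, ?_⟩
  · rcases lt_or_gt_of_ne h.ne with hlt | hlt
    exacts [.inl (covBy_of_adj h hlt), .inr (covBy_of_adj h.symm hlt)]
  · rintro (h | h)
    exacts [adj_of_covBy h, (adj_of_covBy h).symm]

theorem existsUnique_hasse_adj_iff [Nontrivial V] [IsStronglyAtomic V] [IsStronglyCoatomic V]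
    {c : V} : (∃! d, (hasse V).Adj c d) ↔ IsMin c ∨ IsMax c := by
  simp only [hasse_adj]
  constructor
  · rintro ⟨d, -, hd⟩
    by_contra! h
    obtain ⟨a, hac⟩ := not_isMin_iff.mp h.1
    obtain ⟨b, hcb⟩ := not_isMax_iff.mp h.2
    obtain ⟨d₁, -, hd₁⟩ := exists_le_covBy_of_lt hac
    obtain ⟨d₂, hd₂, -⟩ := exists_covBy_le_of_lt hcb
    exact (hd₁.lt.trans hd₂.lt).ne ((hd d₁ (.inr hd₁)).trans (hd d₂ (.inl hd₂)).symm)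
  · obtain ⟨e, hec⟩ := exists_ne c
    rintro (hc | hc)
    · have hce : c < e := (lt_or_gt_of_ne hec).resolve_left hc.not_lt
      obtain ⟨d, hd, -⟩ := exists_covBy_le_of_lt hce
      refine ⟨d, .inl hd, fun d' => ?_⟩
      rintro (h | h)
      exacts [h.unique_right hd, absurd h.lt hc.not_lt]
    · have hce : e < c := (lt_or_gt_of_ne hec).resolve_right hc.not_lt
      obtain ⟨d, -, hd⟩ := exists_le_covBy_of_lt hce
      refine ⟨d, .inr hd, fun d' => ?_⟩
      rintro (h | h)
      exacts [absurd h.lt hc.not_lt, h.unique_left hd]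

end LinearOrder

end SimpleGraph

theorem stmt15_general {V C : Type*} [Fintype C] (hC : 2 ≤ Fintype.card C)
    (pref : V → C → C → Prop) (hlin : ∀ i, IsStrictTotalOrder C (pref i))
    (i₁ i₂ : V)
    (hrev : ∀ a b : C, pref i₁ a b ↔ pref i₂ b a)
    (T : SimpleGraph C) (hT : T.IsTree)
    (hsp : ∀ (i : V) (a : C), (T.induce {b | pref i b a}).Preconnected) :
    (∀ x y : C, T.Adj x y ↔
        ((pref i₁ x y ∧ ∀ c, ¬ (pref i₁ x c ∧ pref i₁ c y)) ∨
         (pref i₁ y x ∧ ∀ c, ¬ (pref i₁ y c ∧ pref i₁ c x)))) ∧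
    (∃ a b : C, a ≠ b ∧ ∀ c : C, (∃! d, T.Adj c d) ↔ (c = a ∨ c = b)) := by
  classical
  have := hlin i₁
  let _ : LinearOrder C := linearOrderOfSTO (pref i₁)
  have hIoi (a : C) : (T.induce (Set.Ioi a)).Preconnected := by
    rw [show Set.Ioi a = {b | pref i₂ b a} from Set.ext fun b => hrev a b]
    exact hsp i₂ a
  obtain rfl : T = SimpleGraph.hasse C := hT.eq_hasse (hsp i₁) hIoi
  have : Nontrivial C := Fintype.one_lt_card_iff_nontrivial.mp hC
  let _ : BoundedOrder C := Fintype.toBoundedOrder C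
  refine ⟨fun x y => ?_, ⊥, ⊤, bot_ne_top, fun c => ?_⟩
  · simp only [SimpleGraph.hasse_adj, CovBy, not_and]
    rfl
  · rw [SimpleGraph.existsUnique_hasse_adj_iff, isMin_iff_eq_bot, isMax_iff_eq_top]

/-- If two distinct voters have exactly reversed preference orders and the profile is
single-peaked on a tree `T` (with at least two candidates), then `T` is a path whose
edges are exactly the pairs of consecutive candidates in the first voter's ranking. -/
theorem stmt15 {V C : Type*} [Fintype C] (hC : 2 ≤ Fintype.card C)
    (pref : V → C → C → Prop) (hlin : ∀ i, IsStrictTotalOrder C (pref i))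
    (i₁ i₂ : V) (hne : i₁ ≠ i₂)
    (hrev : ∀ a b : C, pref i₁ a b ↔ pref i₂ b a)
    (T : SimpleGraph C) (hT : T.IsTree)
    (hsp : ∀ (i : V) (a : C), (T.induce {b | pref i b a}).Preconnected) :
    (∀ x y : C, T.Adj x y ↔
        ((pref i₁ x y ∧ ∀ c, ¬ (pref i₁ x c ∧ pref i₁ c y)) ∨
         (pref i₁ y x ∧ ∀ c, ¬ (pref i₁ y c ∧ pref i₁ c x)))) ∧
    (∃ a b : C, a ≠ b ∧ ∀ c : C, (∃! d, T.Adj c d) ↔ (c = a ∨ c = b)) :=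
  stmt15_general hC pref hlin i₁ i₂ hrev T hT hsp
end

section
/- Let P be a profile single-peaked on a tree T, let W ⊆ C with |W| ≥ 2, and let i be a voter. Then for any a ∈ W, every candidate b ∈ W lying on the unique path in T from top(i, W) to a satisfies b ⪰_i a. In particular, the restriction of voter i's preference to any subset W that is connected in T is single-peaked on the subtree T|_W. -/
lemma tree_path_split {C : Type*} {T : SimpleGraph C} (hT : T.IsTree)
    {t w a b : C} (q : T.Walk w a) (hq : q.IsPath) (hb : b ∈ q.support) :
    (∃ p : T.Walk t a, p.IsPath ∧ b ∈ p.support) ∨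
    (∃ r : T.Walk t w, r.IsPath ∧ b ∈ r.support) := by
  classical
  obtain ⟨p, hp, -⟩ := hT.existsUnique_path t a
  obtain ⟨r, hr, -⟩ := hT.existsUnique_path t w
  by_cases h1 : b ∈ p.support
  · exact Or.inl ⟨p, hp, h1⟩
  by_cases h2 : b ∈ r.support
  · exact Or.inr ⟨r, hr, h2⟩
  exfalso
  set s := (r.reverse.append p).bypass with hs
  have hbs : b ∉ s.support := by
    intro hmem
    have := SimpleGraph.Walk.support_bypass_subset _ hmem
    rw [SimpleGraph.Walk.support_append] at this
    rcases List.mem_append.mp this with h | h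
    · exact h2 (by simpa using h)
    · exact h1 (List.mem_of_mem_tail h)
  have : s = q := (hT.existsUnique_path w a).unique (SimpleGraph.Walk.bypass_isPath _) hq
  rw [this] at hbs
  exact hbs hb

/-- If `P` is single-peaked on `T` and `W ⊆ C` with `|W| ≥ 2`, then for every voter `i`,
any `b ∈ W` on the unique path in `T` from `top(i, W)` to `a ∈ W` satisfies `b ⪰ᵢ a`;
in particular the restriction of the profile to a connected `W` is single-peaked on the
induced subtree `T|_W`. -/
theorem stmt16 {V C : Type*} [Fintype C]
    (pref : V → C → C → Prop) (hlin : ∀ i, IsStrictTotalOrder C (pref i))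
    (top : V → C) (htop : ∀ i b, b ≠ top i → pref i (top i) b)
    (T : SimpleGraph C) (hT : T.IsTree)
    (hsp : SinglePeakedOn pref top T)
    (W : Set C) (hW : 2 ≤ W.ncard)
    (topW : V → C) (htopW : ∀ i, topW i ∈ W ∧ ∀ b ∈ W, b ≠ topW i → pref i (topW i) b)
    (i : V) :
    (∀ a ∈ W, ∀ b ∈ W,
        (∃ p : T.Walk (topW i) a, p.IsPath ∧ b ∈ p.support) →
        b = a ∨ pref i b a) ∧
    ((T.induce W).Connected →
      SinglePeakedOn (fun (j : V) (x y : W) => pref j (x : C) (y : C))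
        (fun j => (⟨topW j, (htopW j).1⟩ : W)) (T.induce W)) := by
  have key : ∀ j : V, ∀ a ∈ W, ∀ b ∈ W,
      (∃ p : T.Walk (topW j) a, p.IsPath ∧ b ∈ p.support) →
      b = a ∨ pref j b a := by
    intro j a ha b hb ⟨q, hq, hbq⟩
    by_cases hba : b = a
    · exact Or.inl hba
    right
    by_cases hbw : b = topW j
    · subst hbw
      exact (htopW j).2 a ha (fun h => hba h.symm)
    by_cases hbt : b = top j
    · subst hbt
      exact htop j a (fun h => hba h.symm)
    rcases tree_path_split hT q hq hbq (t := top j) with ⟨p, hp, hbp⟩ | ⟨r, hr, hbr⟩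
    · exact (hsp j a b (Ne.symm hba) hbt ⟨p, hp, hbp⟩).2
    · exfalso
      have h1 := (hsp j (topW j) b (fun h => hbw h.symm) hbt ⟨r, hr, hbr⟩).2
      have h2 := (htopW j).2 b hb hbw
      haveI := hlin j
      exact irrefl_of (pref j) b (trans_of (pref j) h1 h2)
  refine ⟨key i, fun _ j x y hxy hytop ⟨q, hq, hbq⟩ => ?_⟩
  let f : T.induce W →g T := ⟨Subtype.val, fun {u v} h => h⟩
  have hy : (y : C) ≠ topW j := fun h => hytop (Subtype.ext h)
  refine ⟨(htopW j).2 y y.2 hy, ?_⟩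
  have hmem : (y : C) ∈ (q.map f).support := by
    rw [SimpleGraph.Walk.support_map]
    exact List.mem_map.mpr ⟨y, hbq, rfl⟩
  have := key j x x.2 y y.2
    ⟨q.map f, SimpleGraph.Walk.map_isPath_of_injective Subtype.val_injective hq, hmem⟩
  rcases this with h | h
  · exact absurd (Subtype.ext h) (fun h' => hxy h'.symm)
  · exact h
end
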